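/- Let (L, P) be a complete flag of V that is in general position with every φ-stable complete flag of V. Then there exist nonzero scalars c₁, c₂, c₃ ∈ E and a scalar a ∈ E with a ≠ 0 and a ≠ 1 such that P = span_E{c₁·e₁ + c₂·e₂, c₁·e₁ + a·c₂·e₂ + c₃·e₃} and L = span_E{c₁·e₁ + a·c₂·e₂ + c₃·e₃}. (After multiplying the Frobenius eigenvectors by suitable nonzero scalars, the Hodge filtration of a non-critical crystalline representation takes the explicit normal form of equation (1.1) of the paper, for some Hodge parameter a.) -/

import Mathlib

open Submodule

noncomputable section

variable (E : Type*) [Field E]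

/-- The ambient 3-dimensional space `V = E³`. -/
abbrev V3 (E : Type*) [Field E] := Fin 3 → E

/-- The standard basis vectors `e₁, e₂, e₃` (indexed by `0, 1, 2`). -/
def e3 (i : Fin 3) : V3 E := Pi.single i 1

/-- The diagonal endomorphism `φ` with `φ(eᵢ) = αᵢ • eᵢ`. -/
def phi3 (α : Fin 3 → E) : V3 E →ₗ[E] V3 E where
  toFun v := fun i => α i * v i
  map_add' u v := by funext i; simp [mul_add]
  map_smul' c v := by funext i; simp [smul_eq_mul]; ring

/-- The line `L_a = span{e₁ + a•e₂ + e₃}`. -/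
def La (a : E) : Submodule E (V3 E) :=
  span E {e3 E 0 + a • e3 E 1 + e3 E 2}

/-- The plane `P_a = span{e₁ + e₂, e₁ + a•e₂ + e₃}`. -/
def Pa (a : E) : Submodule E (V3 E) :=
  span E {e3 E 0 + e3 E 1, e3 E 0 + a • e3 E 1 + e3 E 2}

/-- `(F¹, F²)` is a complete flag: `F¹ ⊆ F²` with `dim F¹ = 1`, `dim F² = 2`. -/
def IsCompleteFlag (F1 F2 : Submodule E (V3 E)) : Prop :=
  F1 ≤ F2 ∧ Module.finrank E ↥F1 = 1 ∧ Module.finrank E ↥F2 = 2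

/-- The flag `(F¹, F²)` is stable under `φ`. -/
def PhiStable (α : Fin 3 → E) (F1 F2 : Submodule E (V3 E)) : Prop :=
  F1.map (phi3 E α) ≤ F1 ∧ F2.map (phi3 E α) ≤ F2

/-- Two complete flags `(F¹, F²)` and `(G¹, G²)` are in general position:
`dim (Fⁱ ⊓ Gʲ) = max 0 (i + j - 3)` for `i, j ∈ {1, 2}`. -/
def GenPos (F1 F2 G1 G2 : Submodule E (V3 E)) : Prop :=
  Module.finrank E ↥(F1 ⊓ G1) = 0 ∧ Module.finrank E ↥(F1 ⊓ G2) = 0 ∧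
  Module.finrank E ↥(F2 ⊓ G1) = 0 ∧ Module.finrank E ↥(F2 ⊓ G2) = 1

/-! Since `φ` is diagonal, each coordinate flag `(span{eᵢ}, span{eᵢ, eⱼ})` is `φ`-stable, so
genericity forces `L` to avoid the coordinate planes and `P` to avoid the coordinate axes.
Hence a generator `v` of `L` has all coordinates nonzero, and the line `P ∩ span{e₁, e₂}` is
spanned by a vector `w` with `w₁ = v₁` and `w₂ ≠ 0`. Then `P = span{w, v}`, with `c₂ = w₂` and
`a = v₂ / w₂`; and `a ≠ 1`, since otherwise `v - w` would be a nonzero vector of `P ∩ span{e₃}`. -/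

section LinearAlgebra

variable {K M : Type*} [Field K] [AddCommGroup M] [Module K M]

theorem Submodule.map_span_le_of_forall_eq_smul {R : Type*} [Semiring R] [Module R M]
    (f : M →ₗ[R] M) {s : Set M} (h : ∀ x ∈ s, ∃ c : R, f x = c • x) :
    (span R s).map f ≤ span R s :=
  map_span_le _ _ _ |>.mpr fun x hx => by
    obtain ⟨c, hc⟩ := h x hx
    exact hc ▸ smul_mem _ c (subset_span hx)

theorem finrank_span_pair {x y : M} (h : LinearIndependent K ![x, y]) :
    Module.finrank K (span K {x, y}) = 2 := by
  rw [← Matrix.range_cons_cons_empty x y ![], finrank_span_eq_card h, Fintype.card_fin]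

theorem Submodule.span_pair_eq_of_finrank_eq_two {W : Submodule K M} {x y : M}
    (hW : Module.finrank K W = 2) (hx : x ∈ W) (hy : y ∈ W) (h : LinearIndependent K ![x, y]) :
    span K {x, y} = W := by
  have := Module.finite_of_finrank_pos (hW ▸ two_pos)
  refine eq_of_le_of_finrank_eq (span_le.mpr ?_) (by rw [hW, finrank_span_pair h])
  rintro _ (rfl | rfl)
  exacts [hx, hy]

theorem Submodule.exists_eq_span_singleton_of_finrank_eq_one {W : Submodule K M}
    (h : Module.finrank K W = 1) : ∃ v, v ≠ 0 ∧ W = span K {v} := by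
  have := Module.finite_of_finrank_eq_succ h
  obtain ⟨v, rfl⟩ := ((finrank_le_one_iff_isPrincipal W).mp h.le).principal
  refine ⟨v, fun hv => ?_, rfl⟩
  rw [span_singleton_eq_bot.mpr hv, finrank_bot] at h
  exact zero_ne_one h

theorem linearIndependent_pair_of_apply_eq_zero {ι : Type*} {x y : ι → K} {k : ι}
    (hx : x ≠ 0) (hxk : x k = 0) (hyk : y k ≠ 0) : LinearIndependent K ![x, y] :=
  (LinearIndependent.pair_iff' hx).mpr fun c hc => hyk (by simp [← hc, hxk])

end LinearAlgebra

variable {E}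

theorem GenPos.disjoint_fst_snd {F1 F2 G1 G2 : Submodule E (V3 E)}
    (h : GenPos E F1 F2 G1 G2) : Disjoint F1 G2 :=
  disjoint_iff.mpr (finrank_eq_zero.mp h.2.1)

theorem GenPos.disjoint_snd_fst {F1 F2 G1 G2 : Submodule E (V3 E)}
    (h : GenPos E F1 F2 G1 G2) : Disjoint F2 G1 :=
  disjoint_iff.mpr (finrank_eq_zero.mp h.2.2.1)

theorem smul_e3_add_smul_e3_add_smul_e3 (v : V3 E) :
    v 0 • e3 E 0 + v 1 • e3 E 1 + v 2 • e3 E 2 = v := by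
  funext k
  fin_cases k <;> simp [e3]

theorem phi3_e3 (α : Fin 3 → E) (i : Fin 3) : phi3 E α (e3 E i) = α i • e3 E i := by
  funext j
  by_cases h : j = i <;> simp [phi3, e3, h]

theorem mem_span_e3_of_apply_eq_zero {v : V3 E} {i : Fin 3} (h : ∀ k, k ≠ i → v k = 0) :
    v ∈ span E {e3 E i} :=
  mem_span_singleton.mpr ⟨v i, funext fun k => by
    by_cases hk : k = i <;> simp [e3, hk, h k]⟩

theorem mem_span_e3_pair_of_apply_eq_zero {v : V3 E} {i j : Fin 3} (hij : i ≠ j)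
    (h : ∀ k, k ≠ i → k ≠ j → v k = 0) : v ∈ span E {e3 E i, e3 E j} :=
  mem_span_pair.mpr ⟨v i, v j, funext fun k => by
    by_cases hki : k = i
    · subst hki; simp [e3, hij]
    by_cases hkj : k = j
    · subst hkj; simp [e3, Ne.symm hij]
    simp [e3, hki, hkj, h k hki hkj]⟩

theorem apply_eq_zero_of_mem_span_e3_pair {v : V3 E} {i j k : Fin 3} (hki : k ≠ i)
    (hkj : k ≠ j) (hv : v ∈ span E {e3 E i, e3 E j}) : v k = 0 := by
  obtain ⟨a, b, rfl⟩ := mem_span_pair.mp hv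
  simp [e3, hki, hkj]

theorem isCompleteFlag_e3 {i j : Fin 3} (hij : i ≠ j) :
    IsCompleteFlag E (span E {e3 E i}) (span E {e3 E i, e3 E j}) := by
  refine ⟨span_mono (Set.singleton_subset_iff.mpr (Set.mem_insert _ _)),
    finrank_span_singleton (by simp [e3]), finrank_span_pair ?_⟩
  exact linearIndependent_pair_of_apply_eq_zero (k := j) (by simp [e3]) (by simp [e3, hij.symm])
    (by simp [e3])

theorem phiStable_e3 (α : Fin 3 → E) (i j : Fin 3) :
    PhiStable E α (span E {e3 E i}) (span E {e3 E i, e3 E j}) := by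
  constructor <;> refine map_span_le_of_forall_eq_smul _ ?_
  · rintro _ rfl
    exact ⟨_, phi3_e3 α i⟩
  · rintro _ (rfl | rfl)
    exacts [⟨_, phi3_e3 α i⟩, ⟨_, phi3_e3 α j⟩]

theorem exists_pair_forall_eq (k : Fin 3) :
    ∃ i j : Fin 3, i ≠ j ∧ ∀ m, m ≠ i → m ≠ j → m = k := by
  fin_cases k
  exacts [⟨1, 2, by decide, by decide⟩, ⟨0, 2, by decide, by decide⟩,
    ⟨0, 1, by decide, by decide⟩]

section Disjoint

variable {W : Submodule E (V3 E)}

theorem apply_ne_zero_of_forall_disjoint_span_e3_pair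
    (hW : ∀ i j : Fin 3, i ≠ j → Disjoint W (span E {e3 E i, e3 E j}))
    {v : V3 E} (hv : v ∈ W) (hv0 : v ≠ 0) (k : Fin 3) : v k ≠ 0 := fun hvk => by
  obtain ⟨i, j, hij, hk⟩ := exists_pair_forall_eq k
  exact hv0 <| disjoint_def.mp (hW i j hij) v hv
    (mem_span_e3_pair_of_apply_eq_zero hij fun m hi hj => hk m hi hj ▸ hvk)

theorem apply_ne_zero_of_disjoint_span_e3 {u : V3 E} {i j : Fin 3}
    (hW : Disjoint W (span E {e3 E j})) (hu : u ∈ W) (hu0 : u ≠ 0)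
    (huij : u ∈ span E {e3 E i, e3 E j}) : u i ≠ 0 := fun hui => by
  refine hu0 (disjoint_def.mp hW u hu (mem_span_e3_of_apply_eq_zero fun k hkj => ?_))
  by_cases hki : k = i
  · exact hki ▸ hui
  · exact apply_eq_zero_of_mem_span_e3_pair hki hkj huij

theorem exists_mem_apply_zero_eq (hW01 : Module.finrank E ↥(W ⊓ span E {e3 E 0, e3 E 1}) = 1)
    (hW0 : Disjoint W (span E {e3 E 0})) (hW1 : Disjoint W (span E {e3 E 1}))
    {c : E} (hc : c ≠ 0) : ∃ w ∈ W, w 0 = c ∧ w 1 ≠ 0 ∧ w 2 = 0 := by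
  obtain ⟨u, ⟨huW, hu01⟩, hu⟩ := exists_mem_ne_zero_of_ne_bot fun hb => by
    rw [finrank_eq_zero.mpr hb] at hW01
    exact zero_ne_one hW01
  have hu0 : u 0 ≠ 0 := apply_ne_zero_of_disjoint_span_e3 hW1 huW hu hu01
  have hu1 : u 1 ≠ 0 := apply_ne_zero_of_disjoint_span_e3 hW0 huW hu (Set.pair_comm _ _ ▸ hu01)
  have hu2 : u 2 = 0 := apply_eq_zero_of_mem_span_e3_pair (by decide) (by decide) hu01
  exact ⟨(c / u 0) • u, smul_mem _ _ huW, by simp [hu0], by simp [hu0, hu1, hc], by simp [hu2]⟩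

theorem apply_one_ne_of_disjoint_span_e3 (hW : Disjoint W (span E {e3 E 2})) {v w : V3 E}
    (hv : v ∈ W) (hw : w ∈ W) (h0 : w 0 = v 0) (hv2 : v 2 ≠ 0) (hw2 : w 2 = 0) :
    v 1 ≠ w 1 := fun h1 => by
  have hvw : v - w ∈ span E {e3 E 2} := mem_span_e3_of_apply_eq_zero fun k hk => by
    fin_cases k
    · simp [h0]
    · simp [h1]
    · exact absurd rfl hk
  have := disjoint_def.mp hW _ (sub_mem hv hw) hvw
  exact hv2 (by simpa [hw2] using congrFun this 2)

end Disjoint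

theorem stmt2_general (α : Fin 3 → E)
    (L P : Submodule E (V3 E)) (hLP : IsCompleteFlag E L P)
    (hgen : ∀ F1 F2 : Submodule E (V3 E), IsCompleteFlag E F1 F2 → PhiStable E α F1 F2 →
      GenPos E L P F1 F2) :
    ∃ c1 c2 c3 a : E, c1 ≠ 0 ∧ c2 ≠ 0 ∧ c3 ≠ 0 ∧ a ≠ 0 ∧ a ≠ 1 ∧
      P = span E {c1 • e3 E 0 + c2 • e3 E 1,
                  c1 • e3 E 0 + (a * c2) • e3 E 1 + c3 • e3 E 2} ∧
      L = span E {c1 • e3 E 0 + (a * c2) • e3 E 1 + c3 • e3 E 2} := by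
  obtain ⟨hLP, hL, hP⟩ := hLP
  have hcoord {i j : Fin 3} (hij : i ≠ j) := hgen _ _ (isCompleteFlag_e3 hij) (phiStable_e3 α i j)
  obtain ⟨v, hv0, rfl⟩ := exists_eq_span_singleton_of_finrank_eq_one hL
  have hvP : v ∈ P := hLP (mem_span_singleton_self v)
  have hv : ∀ k, v k ≠ 0 := apply_ne_zero_of_forall_disjoint_span_e3_pair
    (fun _ _ hij => (hcoord hij).disjoint_fst_snd) (mem_span_singleton_self v) hv0
  obtain ⟨w, hwP, hw0, hw1, hw2⟩ := exists_mem_apply_zero_eq (hcoord (j := 1) zero_ne_one).2.2.2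
    (hcoord (j := 1) zero_ne_one).disjoint_snd_fst
    (hcoord (j := 2) (by decide : (1 : Fin 3) ≠ 2)).disjoint_snd_fst (hv 0)
  have hw : v 0 • e3 E 0 + w 1 • e3 E 1 = w := by
    simpa [hw0, hw2] using smul_e3_add_smul_e3_add_smul_e3 w
  have hv' : v 0 • e3 E 0 + (v 1 / w 1 * w 1) • e3 E 1 + v 2 • e3 E 2 = v := by
    rw [div_mul_cancel₀ _ hw1, smul_e3_add_smul_e3_add_smul_e3]
  have ha1 : v 1 / w 1 ≠ 1 := (div_eq_one_iff_eq hw1).not.mpr <|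
    apply_one_ne_of_disjoint_span_e3 (hcoord (j := 0) (by decide : (2 : Fin 3) ≠ 0)).disjoint_snd_fst
      hvP hwP hw0 (hv 2) hw2
  refine ⟨v 0, w 1, v 2, v 1 / w 1, hv 0, hw1, hv 2, div_ne_zero (hv 1) hw1, ha1, ?_, by rw [hv']⟩
  rw [hw, hv', span_pair_eq_of_finrank_eq_two hP hwP hvP
    (linearIndependent_pair_of_apply_eq_zero (fun h => hw1 (by simp [h])) hw2 (hv 2))]

/-- A complete flag `(L, P)` in general position with every `φ`-stable complete
flag takes the normal form of equation (1.1): `P = span{c₁e₁ + c₂e₂, c₁e₁ + a·c₂e₂ + c₃e₃}`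
and `L = span{c₁e₁ + a·c₂e₂ + c₃e₃}` for some nonzero `c₁, c₂, c₃` and some `a ∉ {0, 1}`. -/
theorem stmt2 (α : Fin 3 → E) (hα0 : ∀ i, α i ≠ 0) (hα : Function.Injective α)
    (L P : Submodule E (V3 E)) (hLP : IsCompleteFlag E L P)
    (hgen : ∀ F1 F2 : Submodule E (V3 E), IsCompleteFlag E F1 F2 → PhiStable E α F1 F2 →
      GenPos E L P F1 F2) :
    ∃ c1 c2 c3 a : E, c1 ≠ 0 ∧ c2 ≠ 0 ∧ c3 ≠ 0 ∧ a ≠ 0 ∧ a ≠ 1 ∧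
      P = span E {c1 • e3 E 0 + c2 • e3 E 1,
                  c1 • e3 E 0 + (a * c2) • e3 E 1 + c3 • e3 E 2} ∧
      L = span E {c1 • e3 E 0 + (a * c2) • e3 E 1 + c3 • e3 E 2} :=
  stmt2_general α L P hLP hgen
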